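/- Let T be a spherically homogeneous rooted tree, let G ≤ Aut T be a weakly branch group, let B be a nontrivial basal subgroup of G, and let v be a vertex moved by B (i.e. v^b ≠ v for some b ∈ B). Let R be the normal closure of rist_G(v) in N_G(B), i.e. the subgroup of G generated by {h⁻¹·rist_G(v)·h : h ∈ N_G(B)}. Then R is a basal subgroup of G, N_G(R) = N_G(B), and B ∩ R ≠ 1. -/

import Mathlib

open Equiv

/-- Vertices of the spherically homogeneous rooted tree of type `m`: finite sequences
`(v_0, …, v_{n−1})` with `v_i ∈ Fin (m i)`. -/
def Vertex (m : ℕ → ℕ) : Type := (n : ℕ) × (∀ i : Fin n, Fin (m i))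

/-- `u` is a prefix of `v` (i.e. `u` is an ancestor of `v`, or `u = v`). -/
def IsPrefixV {m : ℕ → ℕ} (u v : Vertex m) : Prop :=
  u.1 ≤ v.1 ∧ ∀ (i : ℕ) (hu : i < u.1) (hv : i < v.1), (u.2 ⟨i, hu⟩ : ℕ) = (v.2 ⟨i, hv⟩ : ℕ)

/-- The automorphism group `Aut T` of the tree: the permutations of the vertex set which
preserve the length (level) and the prefix relation. -/
def treeAut (m : ℕ → ℕ) : Subgroup (Perm (Vertex m)) where
  carrier := {f | (∀ v, (f v).1 = v.1) ∧ ∀ u v, IsPrefixV u v ↔ IsPrefixV (f u) (f v)}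
  one_mem' := ⟨fun _ => rfl, fun _ _ => by simp⟩
  mul_mem' := by
    rintro f g ⟨hf1, hf2⟩ ⟨hg1, hg2⟩
    refine ⟨fun v => ?_, fun u v => ?_⟩
    · rw [Perm.mul_apply, hf1, hg1]
    · rw [Perm.mul_apply, Perm.mul_apply, ← hf2, ← hg2]
  inv_mem' := by
    rintro f ⟨hf1, hf2⟩
    refine ⟨fun v => ?_, fun u v => ?_⟩
    · have h := hf1 (f⁻¹ v)
      rw [← Perm.mul_apply, mul_inv_cancel, Perm.one_apply] at h
      exact h.symm
    · have h := hf2 (f⁻¹ u) (f⁻¹ v)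
      simp only [← Perm.mul_apply, mul_inv_cancel, Perm.one_apply] at h
      exact h.symm

variable {m : ℕ → ℕ}

/-- The stabilizer `st_G(v)` of a vertex `v` in `G`. -/
def st (G : Subgroup (Perm (Vertex m))) (v : Vertex m) : Subgroup (Perm (Vertex m)) :=
  G ⊓ MulAction.stabilizer (Perm (Vertex m)) v

/-- The rigid vertex stabilizer `rist_G(v)`: elements of `G` fixing every vertex that does not
have `v` as a prefix. -/
def rist (G : Subgroup (Perm (Vertex m))) (v : Vertex m) : Subgroup (Perm (Vertex m)) :=
  G ⊓ fixingSubgroup (Perm (Vertex m)) {u | ¬ IsPrefixV v u}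

/-- The level stabilizer `St_G(n)`: the pointwise stabilizer in `G` of all vertices of length
`n`. -/
def StL (G : Subgroup (Perm (Vertex m))) (n : ℕ) : Subgroup (Perm (Vertex m)) :=
  G ⊓ fixingSubgroup (Perm (Vertex m)) {u : Vertex m | u.1 = n}

/-- `G` acts transitively on every level of the tree. -/
def LevelTransitive (G : Subgroup (Perm (Vertex m))) : Prop :=
  ∀ u v : Vertex m, u.1 = v.1 → ∃ g ∈ G, g u = v

/-- `G` is weakly branch: level-transitive with all rigid vertex stabilizers infinite. -/
def IsWeaklyBranch (G : Subgroup (Perm (Vertex m))) : Prop :=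
  LevelTransitive G ∧ ∀ v : Vertex m, Infinite (rist G v)

/-- The conjugate subgroup `g B g⁻¹`. -/
def conjS {Γ : Type*} [Group Γ] (g : Γ) (B : Subgroup Γ) : Subgroup Γ :=
  Subgroup.map (MulAut.conj g).toMonoidHom B

/-- A weakly branch action of a group `G` on the tree of type `m`: an injective homomorphism
into `Aut T` whose image is weakly branch. -/
def IsWBAction {G : Type*} [Group G] (m : ℕ → ℕ) (ρ : G →* Perm (Vertex m)) : Prop :=
  Function.Injective ρ ∧ ρ.range ≤ treeAut m ∧ IsWeaklyBranch ρ.range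

/-- `G` is `T`-rigid: it admits a weakly branch action on `T` and the images of any two weakly
branch actions are conjugate in `Aut T`. -/
def TRigid (G : Type*) [Group G] (m : ℕ → ℕ) : Prop :=
  (∃ ρ : G →* Perm (Vertex m), IsWBAction m ρ) ∧
  ∀ ρ τ : G →* Perm (Vertex m), IsWBAction m ρ → IsWBAction m τ →
    ∃ f ∈ treeAut m, τ.range = conjS f ρ.range

/-- `st_ρ(v) = ρ⁻¹(st_{ρ(G)}(v))`. -/
def stA {G : Type*} [Group G] (ρ : G →* Perm (Vertex m)) (v : Vertex m) : Subgroup G :=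
  Subgroup.comap ρ (st ρ.range v)

/-- `rist_ρ(v) = ρ⁻¹(rist_{ρ(G)}(v))`. -/
def ristA {G : Type*} [Group G] (ρ : G →* Perm (Vertex m)) (v : Vertex m) : Subgroup G :=
  Subgroup.comap ρ (rist ρ.range v)

/-- A subgroup `B` of a group `Γ` is basal if it has finitely many conjugates and its normal
closure is the internal direct product of its distinct conjugates: distinct conjugates commute
elementwise, each distinct conjugate intersects the subgroup generated by the remaining ones
trivially, and the conjugates together generate the normal closure. -/
def IsBasal {Γ : Type*} [Group Γ] (B : Subgroup Γ) : Prop :=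
  (Set.range fun g : Γ => conjS g B).Finite ∧
  (∀ g h : Γ, conjS g B ≠ conjS h B → ∀ x ∈ conjS g B, ∀ y ∈ conjS h B, Commute x y) ∧
  (∀ g : Γ, conjS g B ⊓ (⨆ h ∈ {h : Γ | conjS h B ≠ conjS g B}, conjS h B) = ⊥) ∧
  (⨆ g : Γ, conjS g B) = Subgroup.normalClosure (B : Set Γ)


theorem Equiv.Perm.apply_inv_self {α : Type*} (f : Perm α) (x : α) : f (f⁻¹ x) = x :=
  f.apply_symm_apply x

theorem Equiv.Perm.inv_apply_self {α : Type*} (f : Perm α) (x : α) : f⁻¹ (f x) = x :=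
  f.symm_apply_apply x

/-! ### Auxiliary general group lemmas -/

section GeneralGroup
variable {Γ : Type*} [Group Γ]

lemma mem_conjS {g x : Γ} {B : Subgroup Γ} : x ∈ conjS g B ↔ g⁻¹ * x * g ∈ B := by
  rw [conjS, Subgroup.mem_map_equiv, MulAut.conj_symm_apply]

lemma conjS_one (B : Subgroup Γ) : conjS 1 B = B := by
  ext x; rw [mem_conjS]; simp

lemma conjS_conjS (g h : Γ) (B : Subgroup Γ) : conjS g (conjS h B) = conjS (g * h) B := by
  ext x; rw [mem_conjS, mem_conjS, mem_conjS]; group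

lemma mem_normalizer_iff_conjS {B : Subgroup Γ} {g : Γ} :
    g ∈ (Subgroup.normalizer (B : Set Γ)) ↔ conjS g B = B := by
  rw [Subgroup.mem_normalizer_iff]
  constructor
  · intro h; ext x; rw [mem_conjS, h (g⁻¹ * x * g)]
    constructor
    · intro hx; convert hx using 1; group
    · intro hx; convert hx using 1; group
  · intro h x
    constructor
    · intro hx
      have : g * x * g⁻¹ ∈ conjS g B := by rw [mem_conjS]; convert hx using 1; group
      rwa [h] at this
    · intro hx
      rw [← h, mem_conjS] at hx; convert hx using 1; group

lemma conjS_eq_conjS_iff {B : Subgroup Γ} {g h : Γ} :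
    conjS g B = conjS h B ↔ h⁻¹ * g ∈ (Subgroup.normalizer (B : Set Γ)) := by
  rw [mem_normalizer_iff_conjS, ← conjS_conjS]
  constructor
  · intro he; rw [he, conjS_conjS, inv_mul_cancel, conjS_one]
  · intro he
    have := congrArg (conjS h) he
    rwa [conjS_conjS, mul_inv_cancel, conjS_one] at this

lemma conj_mem_normalizer_conjS {B : Subgroup Γ} {k : Γ} (hk : k ∈ (Subgroup.normalizer (B : Set Γ))) (g : Γ) :
    g * k * g⁻¹ ∈ (Subgroup.normalizer ((conjS g B : Subgroup Γ) : Set Γ)) := by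
  rw [mem_normalizer_iff_conjS, conjS_conjS, conjS_eq_conjS_iff]
  have : g⁻¹ * (g * k * g⁻¹ * g) = k := by group
  rw [this]; exact hk

lemma conjS_iSup {ι : Sort*} (g : Γ) (s : ι → Subgroup Γ) :
    conjS g (⨆ i, s i) = ⨆ i, conjS g (s i) :=
  (Subgroup.gc_map_comap (MulAut.conj g).toMonoidHom).l_iSup

lemma iSup_conjS_normal (B : Subgroup Γ) : (⨆ g : Γ, conjS g B).Normal := by
  constructor
  intro x hx f
  have : f * x * f⁻¹ ∈ conjS f (⨆ g : Γ, conjS g B) := by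
    rw [mem_conjS]; convert hx using 1; group
  rw [conjS_iSup] at this
  have hle : (⨆ i : Γ, conjS f (conjS i B)) ≤ ⨆ g : Γ, conjS g B := by
    refine iSup_le fun g => ?_
    rw [conjS_conjS]
    exact le_iSup (fun g : Γ => conjS g B) (f * g)
  exact hle this

lemma iSup_conjS_eq_normalClosure (B : Subgroup Γ) :
    (⨆ g : Γ, conjS g B) = Subgroup.normalClosure (B : Set Γ) := by
  apply le_antisymm
  · refine iSup_le fun g => ?_
    intro x hx
    rw [mem_conjS] at hx
    have h1 : g⁻¹ * x * g ∈ Subgroup.normalClosure (B : Set Γ) :=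
      Subgroup.subset_normalClosure hx
    have := (Subgroup.normalClosure_normal (s := (B : Set Γ))).conj_mem _ h1 g
    convert this using 1; group
  · haveI := iSup_conjS_normal B
    refine Subgroup.normalClosure_le_normal ?_
    intro x hx
    have : x ∈ conjS 1 B := by rw [mem_conjS]; simpa using hx
    exact (le_iSup (fun g : Γ => conjS g B) 1) this

lemma finiteIndex_normalizer_of_finite {B : Subgroup Γ}
    (hfin : (Set.range fun g : Γ => conjS g B).Finite) : (Subgroup.normalizer (B : Set Γ)).FiniteIndex := by
  have key : ∀ g h : Γ, conjS g B = conjS h B ↔ h⁻¹ * g ∈ (Subgroup.normalizer (B : Set Γ)) := fun g h =>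
    conjS_eq_conjS_iff
  haveI : Finite ↥(Set.range fun g : Γ => conjS g B) := hfin.to_subtype
  have hfq : Finite (Γ ⧸ (Subgroup.normalizer (B : Set Γ))) := by
    refine Finite.of_injective
      (fun q : Γ ⧸ (Subgroup.normalizer (B : Set Γ)) => (⟨Quotient.liftOn' q (fun g => conjS g B) ?_, ?_⟩ :
        ↥(Set.range fun g : Γ => conjS g B))) ?_
    · intro a b hab
      rw [QuotientGroup.leftRel_apply] at hab
      rw [key]
      have h2 := (Subgroup.normalizer (B : Set Γ)).inv_mem hab
      simp only [mul_inv_rev, inv_inv] at h2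
      first | exact hab | exact h2
    · induction q using Quotient.inductionOn' with
      | h g => exact ⟨g, rfl⟩
    · intro q q'
      induction q using Quotient.inductionOn' with
      | h g =>
      induction q' using Quotient.inductionOn' with
      | h g' =>
      intro hqq
      have : conjS g B = conjS g' B := congrArg Subtype.val hqq
      rw [key] at this
      apply Quotient.sound'
      rw [QuotientGroup.leftRel_apply]
      have h2 := (Subgroup.normalizer (B : Set Γ)).inv_mem this
      simp only [mul_inv_rev, inv_inv] at h2
      first | exact this | exact h2
  exact ⟨Subgroup.index_ne_zero_of_finite⟩

lemma infinite_subgroup_of_finiteIndex {H : Type*} [Group H] [Infinite H]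
    (S : Subgroup H) [S.FiniteIndex] : Infinite S := by
  by_contra hfin
  rw [not_infinite_iff_finite] at hfin
  haveI := hfin
  haveI : Finite H :=
    Finite.of_equiv ((H ⧸ S) × S) (Subgroup.groupEquivQuotientProdSubgroup (s := S)).symm
  exact not_finite H

lemma infinite_inf_of_finiteIndex (H K : Subgroup Γ) [K.FiniteIndex]
    (hH : Infinite H) : Infinite ↥(H ⊓ K) := by
  haveI : (K.subgroupOf H).FiniteIndex := inferInstance
  haveI : Infinite (K.subgroupOf H) := infinite_subgroup_of_finiteIndex _
  refine Infinite.of_injective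
    (fun s : K.subgroupOf H => (⟨(s.1 : Γ), s.1.2, Subgroup.mem_subgroupOf.mp s.2⟩ : ↥(H ⊓ K)))
    ?_
  intro a b hab
  simp only [Subtype.mk.injEq] at hab
  exact Subtype.ext (Subtype.ext (congrArg (fun x : ↥(H ⊓ K) => (x : Γ)) hab))

lemma exists_mem_ne_one_of_infinite (H : Subgroup Γ) [Infinite H] :
    ∃ x : Γ, x ∈ H ∧ x ≠ 1 := by
  obtain ⟨y, hy⟩ := exists_ne (1 : H)
  exact ⟨(y : Γ), y.2, fun h => hy (Subtype.ext (by simpa using h))⟩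

end GeneralGroup

/-! ### Auxiliary vertex and tree lemmas -/

lemma vertex_ext {u w : Vertex m} (h1 : u.1 = w.1)
    (h2 : ∀ (i : ℕ) (hu : i < u.1) (hw : i < w.1), (u.2 ⟨i, hu⟩ : ℕ) = (w.2 ⟨i, hw⟩ : ℕ)) :
    u = w := by
  obtain ⟨n, f⟩ := u
  obtain ⟨n', g⟩ := w
  dsimp at h1
  subst h1
  exact congrArg (Sigma.mk n) (funext fun i => Fin.ext (h2 i i.2 i.2))

lemma isPrefixV_refl (u : Vertex m) : IsPrefixV u u := ⟨le_rfl, fun _ _ _ => rfl⟩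

lemma isPrefixV_trans {u w z : Vertex m} (h1 : IsPrefixV u w) (h2 : IsPrefixV w z) :
    IsPrefixV u z := by
  refine ⟨h1.1.trans h2.1, fun i hu hz => ?_⟩
  rw [h1.2 i hu (lt_of_lt_of_le hu h1.1), h2.2 i (lt_of_lt_of_le hu h1.1) hz]

lemma eq_of_prefix_of_level_le {u w : Vertex m} (h : IsPrefixV u w) (hl : w.1 ≤ u.1) :
    u = w :=
  vertex_ext (le_antisymm h.1 hl) fun i hu hw => h.2 i hu hw

lemma eq_of_prefix_prefix {u w z : Vertex m} (hl : u.1 = w.1)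
    (h1 : IsPrefixV u z) (h2 : IsPrefixV w z) : u = w := by
  refine vertex_ext hl fun i hu hw => ?_
  rw [h1.2 i hu (lt_of_lt_of_le hu h1.1), h2.2 i hw (lt_of_lt_of_le hw h2.1)]

/-- A permutation which fixes the complement of `S` pointwise maps `S` into `S`. -/
lemma perm_mem_of_fix_compl {α : Type*} (p : Perm α) (S : Set α)
    (h : ∀ z, z ∉ S → p z = z) {z : α} (hz : z ∈ S) : p z ∈ S := by
  by_contra h'
  have h1 := h _ h'
  have h2 : p z = z := p.injective h1
  rw [h2] at h'
  exact h' hz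

/-- Extraction of the commutation of `D`-components from commutation of products. -/
lemma commute_components {α : Type*} (p q r s : Perm α) (D : Set α)
    (hp : ∀ z, z ∉ D → p z = z) (hr : ∀ z, z ∉ D → r z = z)
    (hq : ∀ z, z ∈ D → q z = z) (hs : ∀ z, z ∈ D → s z = z)
    (h : (p * q) * (r * s) = (r * s) * (p * q)) : p * r = r * p := by
  ext z
  by_cases hz : z ∈ D
  · have h1 : (p * q * (r * s)) z = p (r z) := by
      simp only [Perm.mul_apply]
      rw [hs z hz, hq _ (perm_mem_of_fix_compl r D hr hz)]
    have h2 : (r * s * (p * q)) z = r (p z) := by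
      simp only [Perm.mul_apply]
      rw [hq z hz, hs _ (perm_mem_of_fix_compl p D hp hz)]
    have h3 := congrArg (fun f : Perm α => f z) h
    rw [h1, h2] at h3
    simpa [Perm.mul_apply] using h3
  · simp [Perm.mul_apply, hp z hz, hr z hz]

/-! ### Tree group lemmas -/

section TreeGroup
variable {G : Subgroup (Perm (Vertex m))}

lemma coe_level (hG : G ≤ treeAut m) (x : ↥G) (u : Vertex m) :
    ((x : Perm (Vertex m)) u).1 = u.1 :=
  (hG x.2).1 u

lemma coe_prefix_iff (hG : G ≤ treeAut m) (x : ↥G) (u w : Vertex m) :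
    IsPrefixV u w ↔ IsPrefixV ((x : Perm (Vertex m)) u) ((x : Perm (Vertex m)) w) :=
  (hG x.2).2 u w

lemma mem_ristSub {u : Vertex m} {x : ↥G} :
    x ∈ (rist G u).subgroupOf G ↔
      ∀ w : Vertex m, ¬ IsPrefixV u w → (x : Perm (Vertex m)) w = w := by
  rw [Subgroup.mem_subgroupOf]
  constructor
  · intro h w hw
    exact (mem_fixingSubgroup_iff (Perm (Vertex m))).mp h.2 w hw
  · intro h
    exact ⟨x.2, (mem_fixingSubgroup_iff (Perm (Vertex m))).mpr h⟩

lemma ristSub_fixes (hG : G ≤ treeAut m) {u : Vertex m} {x : ↥G}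
    (hx : x ∈ (rist G u).subgroupOf G) : (x : Perm (Vertex m)) u = u := by
  have hd : IsPrefixV u ((x : Perm (Vertex m)) u) :=
    perm_mem_of_fix_compl (x : Perm (Vertex m)) {z | IsPrefixV u z}
      (fun z hz => mem_ristSub.mp hx z hz) (isPrefixV_refl u)
  exact (eq_of_prefix_of_level_le hd (le_of_eq (coe_level hG x u))).symm

lemma conjS_ristSub (hG : G ≤ treeAut m) (g : ↥G) (u : Vertex m) :
    conjS g ((rist G u).subgroupOf G) = (rist G ((g : Perm (Vertex m)) u)).subgroupOf G := by
  ext x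
  rw [mem_conjS, mem_ristSub, mem_ristSub]
  constructor
  · intro h w hw
    have hw' : ¬ IsPrefixV u ((g : Perm (Vertex m))⁻¹ w) := by
      intro hc
      apply hw
      have := (coe_prefix_iff hG g u ((g : Perm (Vertex m))⁻¹ w)).mp hc
      simpa using this
    have h2 := h _ hw'
    simp only [Subgroup.coe_mul, InvMemClass.coe_inv, Perm.mul_apply,
      Perm.apply_inv_self] at h2
    have h3 := congrArg (g : Perm (Vertex m)) h2
    simpa using h3
  · intro h w hw
    have hw' : ¬ IsPrefixV ((g : Perm (Vertex m)) u) ((g : Perm (Vertex m)) w) := by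
      intro hc
      exact hw ((coe_prefix_iff hG g u w).mpr hc)
    have h2 := h _ hw'
    simp only [Subgroup.coe_mul, InvMemClass.coe_inv, Perm.mul_apply]
    rw [h2]
    simp

lemma ristSub_inf_bot {u w : Vertex m} (hne : u ≠ w) (hl : u.1 = w.1) :
    (rist G u).subgroupOf G ⊓ (rist G w).subgroupOf G = ⊥ := by
  rw [eq_bot_iff]
  intro x hx
  rw [Subgroup.mem_inf, mem_ristSub, mem_ristSub] at hx
  have hxp : (x : Perm (Vertex m)) = 1 := by
    ext z
    by_cases hz : IsPrefixV u z
    · refine hx.2 z fun hc => hne (eq_of_prefix_prefix hl hz hc)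
    · exact hx.1 z hz
  rw [Subgroup.mem_bot]
  exact Subtype.ext (by simpa using hxp)

lemma ristSub_mono {u w : Vertex m} (h : IsPrefixV u w) :
    (rist G w).subgroupOf G ≤ (rist G u).subgroupOf G := by
  intro x hx
  rw [mem_ristSub] at hx ⊢
  intro z hz
  exact hx z fun hc => hz (isPrefixV_trans h hc)

lemma infinite_ristSub (hwb : IsWeaklyBranch G) (u : Vertex m) :
    Infinite ((rist G u).subgroupOf G) := by
  haveI := hwb.2 u
  exact (Equiv.infinite_iff
    (Subgroup.subgroupOfEquivOfLe (inf_le_left : rist G u ≤ G)).toEquiv).mpr (hwb.2 u)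

lemma ristSub_fix_of_ne (hG : G ≤ treeAut m) {u w : Vertex m} (hne : u ≠ w) (hl : u.1 = w.1)
    {x : ↥G} (hx : x ∈ (rist G u).subgroupOf G) {z : Vertex m} (hz : IsPrefixV w z) :
    (x : Perm (Vertex m)) z = z :=
  mem_ristSub.mp hx z fun hc => hne (eq_of_prefix_prefix hl hc hz)

lemma eq_v_of_apply_eq {x y : ↥G} {v : Vertex m}
    (h : (x : Perm (Vertex m)) v = (y : Perm (Vertex m)) v) :
    ((y⁻¹ * x : ↥G) : Perm (Vertex m)) v = v := by
  simp only [Subgroup.coe_mul, InvMemClass.coe_inv, Perm.mul_apply]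
  rw [h]
  simp

lemma coe_inv_perm (x : ↥G) :
    ((x⁻¹ : ↥G) : Perm (Vertex m)) = ((x : ↥G) : Perm (Vertex m))⁻¹ := rfl

/-- The product of the rigid stabilizers over a set of vertices. -/
def ristProd (G : Subgroup (Perm (Vertex m))) (S : Set (Vertex m)) : Subgroup ↥G :=
  ⨆ u ∈ S, (rist G u).subgroupOf G

lemma ristSub_le_ristProd {G : Subgroup (Perm (Vertex m))} {S : Set (Vertex m)}
    {u : Vertex m} (hu : u ∈ S) : (rist G u).subgroupOf G ≤ ristProd G S :=
  le_iSup₂ (f := fun (w : Vertex m) (_ : w ∈ S) => (rist G w).subgroupOf G) u hu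

lemma level_set_finite (m : ℕ → ℕ) (n : ℕ) : {u : Vertex m | u.1 = n}.Finite := by
  rw [← Set.finite_coe_iff]
  refine Finite.of_injective (α := {u : Vertex m | u.1 = n}) (β := ∀ i : Fin n, Fin (m i.1))
    (fun u i => u.1.2 ⟨i.1, lt_of_lt_of_eq i.2 (Eq.symm (u.2 : u.1.1 = n))⟩) ?_
  intro a b hab
  apply Subtype.ext
  refine vertex_ext ((a.2 : a.1.1 = n).trans (b.2 : b.1.1 = n).symm) fun i hu hw => ?_
  have h1 := congrFun hab ⟨i, lt_of_lt_of_eq hu (a.2 : a.1.1 = n)⟩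
  exact congrArg Fin.val h1

section RistProd
variable {G : Subgroup (Perm (Vertex m))}

lemma ristProd_fix {S : Set (Vertex m)} {x : ↥G} (hx : x ∈ ristProd G S)
    {z : Vertex m} (hz : ∀ u ∈ S, ¬ IsPrefixV u z) : (x : Perm (Vertex m)) z = z := by
  have hle : ristProd G S ≤ Subgroup.comap G.subtype
      (fixingSubgroup (Perm (Vertex m)) {z | ∀ u ∈ S, ¬ IsPrefixV u z}) := by
    refine iSup_le fun u => iSup_le fun hu => ?_
    intro y hy
    rw [Subgroup.mem_comap, mem_fixingSubgroup_iff]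
    intro w hw
    exact mem_ristSub.mp hy w (hw u hu)
  have h2 := hle hx
  rw [Subgroup.mem_comap, mem_fixingSubgroup_iff] at h2
  exact h2 z hz

lemma ristProd_eq_one {S : Set (Vertex m)} {x : ↥G} (hx : x ∈ ristProd G S)
    (h2 : ∀ z, (∃ u ∈ S, IsPrefixV u z) → (x : Perm (Vertex m)) z = z) : x = 1 := by
  apply Subtype.ext
  apply Equiv.ext
  intro z
  by_cases hz : ∃ u ∈ S, IsPrefixV u z
  · simpa using h2 z hz
  · push_neg at hz
    simpa using ristProd_fix hx hz

lemma conjS_ristProd (hG : G ≤ treeAut m) (g : ↥G) (S : Set (Vertex m)) :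
    conjS g (ristProd G S) = ristProd G ((fun z => (g : Perm (Vertex m)) z) '' S) := by
  simp only [ristProd]
  rw [conjS_iSup]
  apply le_antisymm
  · refine iSup_le fun u => ?_
    rw [conjS_iSup]
    refine iSup_le fun hu => ?_
    rw [conjS_ristSub hG]
    exact le_iSup₂
      (f := fun (w : Vertex m) (_ : w ∈ (fun z => (g : Perm (Vertex m)) z) '' S) =>
        (rist G w).subgroupOf G) _ ⟨u, hu, rfl⟩
  · refine iSup_le fun w => iSup_le fun hw => ?_
    obtain ⟨u, hu, rfl⟩ := hw
    rw [← conjS_ristSub hG]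
    calc conjS g ((rist G u).subgroupOf G)
        ≤ conjS g (⨆ _ : u ∈ S, (rist G u).subgroupOf G) :=
          Subgroup.map_mono (le_iSup (fun _ : u ∈ S => (rist G u).subgroupOf G) hu)
      _ ≤ ⨆ u, conjS g (⨆ _ : u ∈ S, (rist G u).subgroupOf G) :=
          le_iSup (fun u => conjS g (⨆ _ : u ∈ S, (rist G u).subgroupOf G)) u

lemma ristProd_subset_le {S₁ S₂ : Set (Vertex m)} (h : S₁ ⊆ S₂) :
    ristProd G S₁ ≤ ristProd G S₂ :=
  iSup_le fun u => iSup_le fun hu => ristSub_le_ristProd (h hu)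

lemma ristProd_inj (hG : G ≤ treeAut m) (hwb : IsWeaklyBranch G) {n : ℕ}
    {S₁ S₂ : Set (Vertex m)} (h1 : ∀ u ∈ S₁, u.1 = n) (h2 : ∀ u ∈ S₂, u.1 = n)
    (he : ristProd G S₁ = ristProd G S₂) : S₁ = S₂ := by
  have key : ∀ (T₁ T₂ : Set (Vertex m)), (∀ u ∈ T₁, u.1 = n) → (∀ u ∈ T₂, u.1 = n) →
      ristProd G T₁ = ristProd G T₂ → T₁ ⊆ T₂ := by
    intro T₁ T₂ g1 g2 ge u hu
    by_contra hu2
    haveI := infinite_ristSub hwb u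
    obtain ⟨x, hx, hxne⟩ := exists_mem_ne_one_of_infinite ((rist G u).subgroupOf G)
    apply hxne
    have hxT : x ∈ ristProd G T₂ := by rw [← ge]; exact ristSub_le_ristProd hu hx
    refine ristProd_eq_one hxT ?_
    intro z hz
    obtain ⟨w, hw, hpre⟩ := hz
    refine ristSub_fix_of_ne hG (fun hc => hu2 (by rw [hc]; exact hw)) ?_ hx hpre
    rw [g1 u hu, g2 w hw]
  exact Set.Subset.antisymm (key S₁ S₂ h1 h2 he) (key S₂ S₁ h2 h1 he.symm)

end RistProd

/-- Key lemma: any element of `G` fixing a vertex moved by a nontrivial basal subgroup `B`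
normalizes `B`. -/
lemma stab_le_normalizer_basal (hG : G ≤ treeAut m) (hwb : IsWeaklyBranch G)
    (B : Subgroup ↥G) (hB : IsBasal B) (v : Vertex m)
    (hv : ∃ b ∈ B, ((b : ↥G) : Perm (Vertex m)) v ≠ v) :
    ∀ f : ↥G, (f : Perm (Vertex m)) v = v → f ∈ (Subgroup.normalizer (B : Set ↥G)) := by
  intro f hfv
  by_contra hfN
  have hBB' : conjS f B ≠ conjS (1 : ↥G) B := by
    rw [conjS_one]
    exact fun h => hfN (mem_normalizer_iff_conjS.mpr h)
  obtain ⟨b, hbB, hbv⟩ := hv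
  haveI hNfin : (Subgroup.normalizer (B : Set ↥G)).FiniteIndex := finiteIndex_normalizer_of_finite hB.1
  haveI hinf : Infinite ((rist G v).subgroupOf G) := infinite_ristSub hwb v
  haveI hKinf : Infinite ↥((rist G v).subgroupOf G ⊓ (Subgroup.normalizer (B : Set ↥G))) :=
    infinite_inf_of_finiteIndex _ _ hinf
  have hfv' : ((f : Perm (Vertex m)))⁻¹ v = v := by
    conv_lhs => rw [← hfv]
    simp
  have hconjrist : ∀ k : ↥G, k ∈ (rist G v).subgroupOf G →
      f * k * f⁻¹ ∈ (rist G v).subgroupOf G := by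
    intro k hk
    have h1 : f * k * f⁻¹ ∈ conjS f ((rist G v).subgroupOf G) := by
      rw [mem_conjS]
      have h2 : f⁻¹ * (f * k * f⁻¹) * f = k := by group
      rw [h2]; exact hk
    rwa [conjS_ristSub hG, hfv] at h1
  -- the commuting property
  have hcomm : ∀ k₁ : ↥G, k₁ ∈ (rist G v).subgroupOf G ⊓ (Subgroup.normalizer (B : Set ↥G)) →
      ∀ k : ↥G, k ∈ (rist G v).subgroupOf G ⊓ (Subgroup.normalizer (B : Set ↥G)) →
      Commute k₁ (f * k * f⁻¹) := by
    intro k₁ hk₁' k hk'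
    obtain ⟨hk₁r, hk₁N⟩ := Subgroup.mem_inf.mp hk₁'
    obtain ⟨hkr, hkN⟩ := Subgroup.mem_inf.mp hk'
    set k₂ : ↥G := f * k * f⁻¹ with hk₂def
    have hk₂rist : k₂ ∈ (rist G v).subgroupOf G := hconjrist k hkr
    have hk₂N : k₂ ∈ (Subgroup.normalizer ((conjS f B : Subgroup ↥G) : Set ↥G)) := conj_mem_normalizer_conjS hkN f
    set b' : ↥G := f * b * f⁻¹ with hb'def
    have hb'B : b' ∈ conjS f B := by
      rw [mem_conjS]
      have h2 : f⁻¹ * (f * b * f⁻¹) * f = b := by group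
      rw [h2]; exact hbB
    have hb'v : ((b' : ↥G) : Perm (Vertex m)) v ≠ v := by
      intro hc
      apply hbv
      have h3 : ((b' : ↥G) : Perm (Vertex m)) v
          = (f : Perm (Vertex m)) ((b : Perm (Vertex m)) v) := by
        simp only [hb'def, Subgroup.coe_mul, InvMemClass.coe_inv, Perm.mul_apply]
        rw [hfv']
      rw [h3] at hc
      have h4 := congrArg (fun z => ((f : Perm (Vertex m)))⁻¹ z) hc
      simp only [Perm.inv_apply_self] at h4
      rw [h4, hfv']
    have hbinv : ((b : ↥G) : Perm (Vertex m))⁻¹ v ≠ v := by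
      intro hc
      apply hbv
      conv_lhs => rw [← hc]
      simp
    have hb'inv : ((b' : ↥G) : Perm (Vertex m))⁻¹ v ≠ v := by
      intro hc
      apply hb'v
      conv_lhs => rw [← hc]
      simp
    -- the two commutators
    set c : ↥G := k₁⁻¹ * (b⁻¹ * k₁ * b) with hcdef
    set e : ↥G := k₂⁻¹ * (b'⁻¹ * k₂ * b') with hedef
    have hcB : c ∈ B := by
      have h1 : k₁⁻¹ * b⁻¹ * (k₁⁻¹)⁻¹ ∈ B :=
        (Subgroup.mem_normalizer_iff.mp ((Subgroup.normalizer (B : Set ↥G)).inv_mem hk₁N) b⁻¹).mp (B.inv_mem hbB)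
      have h2 : c = (k₁⁻¹ * b⁻¹ * (k₁⁻¹)⁻¹) * b := by rw [hcdef]; group
      rw [h2]
      exact B.mul_mem h1 hbB
    have heB' : e ∈ conjS f B := by
      have h1 : k₂⁻¹ * b'⁻¹ * (k₂⁻¹)⁻¹ ∈ conjS f B :=
        (Subgroup.mem_normalizer_iff.mp ((Subgroup.normalizer ((conjS f B : Subgroup ↥G) : Set ↥G)).inv_mem hk₂N) b'⁻¹).mp
          ((conjS f B).inv_mem hb'B)
      have h2 : e = (k₂⁻¹ * b'⁻¹ * (k₂⁻¹)⁻¹) * b' := by rw [hedef]; group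
      rw [h2]
      exact (conjS f B).mul_mem h1 hb'B
    have hce : Commute c e :=
      hB.2.1 (1 : ↥G) f hBB'.symm c (by rw [conjS_one]; exact hcB) e heB'
    -- membership of the commutator components in rigid stabilizers
    have hq : b⁻¹ * k₁ * b ∈ (rist G (((b : ↥G) : Perm (Vertex m))⁻¹ v)).subgroupOf G := by
      have h1 : b⁻¹ * k₁ * b ∈ conjS b⁻¹ ((rist G v).subgroupOf G) := by
        rw [mem_conjS]
        have h2 : (b⁻¹)⁻¹ * (b⁻¹ * k₁ * b) * b⁻¹ = k₁ := by group
        rw [h2]; exact hk₁r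
      rwa [conjS_ristSub hG, coe_inv_perm] at h1
    have hs : b'⁻¹ * k₂ * b' ∈ (rist G (((b' : ↥G) : Perm (Vertex m))⁻¹ v)).subgroupOf G := by
      have h1 : b'⁻¹ * k₂ * b' ∈ conjS b'⁻¹ ((rist G v).subgroupOf G) := by
        rw [mem_conjS]
        have h2 : (b'⁻¹)⁻¹ * (b'⁻¹ * k₂ * b') * b'⁻¹ = k₂ := by group
        rw [h2]; exact hk₂rist
      rwa [conjS_ristSub hG, coe_inv_perm] at h1
    -- apply commute_components with D = descendants of v
    have hlevb : (((b : ↥G) : Perm (Vertex m))⁻¹ v).1 = v.1 := by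
      rw [← coe_inv_perm]; exact coe_level hG b⁻¹ v
    have hlevb' : (((b' : ↥G) : Perm (Vertex m))⁻¹ v).1 = v.1 := by
      rw [← coe_inv_perm]; exact coe_level hG b'⁻¹ v
    have hpr : ((k₁⁻¹ : ↥G) : Perm (Vertex m)) * ((k₂⁻¹ : ↥G) : Perm (Vertex m))
        = ((k₂⁻¹ : ↥G) : Perm (Vertex m)) * ((k₁⁻¹ : ↥G) : Perm (Vertex m)) := by
      refine commute_components _ ((b⁻¹ * k₁ * b : ↥G) : Perm (Vertex m)) _
        ((b'⁻¹ * k₂ * b' : ↥G) : Perm (Vertex m)) {z | IsPrefixV v z}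
        ?_ ?_ ?_ ?_ ?_
      · intro z hz
        exact mem_ristSub.mp (((rist G v).subgroupOf G).inv_mem hk₁r) z hz
      · intro z hz
        exact mem_ristSub.mp (((rist G v).subgroupOf G).inv_mem hk₂rist) z hz
      · intro z hz
        exact ristSub_fix_of_ne hG hbinv hlevb hq hz
      · intro z hz
        exact ristSub_fix_of_ne hG hb'inv hlevb' hs hz
      · have h1 := congrArg (fun x : ↥G => (x : Perm (Vertex m))) hce.eq
        simpa only [hcdef, hedef, Subgroup.coe_mul] using h1
    have h5 : k₁⁻¹ * k₂⁻¹ = k₂⁻¹ * k₁⁻¹ :=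
      Subtype.ext (by simpa only [Subgroup.coe_mul] using hpr)
    have h6 : Commute k₁⁻¹ k₂⁻¹ := h5
    have h7 := h6.inv_inv
    simpa using h7
  -- derive the contradiction
  obtain ⟨k, hk, hkne⟩ :=
    exists_mem_ne_one_of_infinite ((rist G v).subgroupOf G ⊓ (Subgroup.normalizer (B : Set ↥G)))
  set a : ↥G := f * k * f⁻¹ with hadef
  have hane : a ≠ 1 := by
    intro h
    apply hkne
    have h1 : k = f⁻¹ * a * f := by rw [hadef]; group
    rw [h1, h]
    group
  have harist : a ∈ (rist G v).subgroupOf G := hconjrist k (Subgroup.mem_inf.mp hk).1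
  obtain ⟨w, hw⟩ : ∃ w, (a : Perm (Vertex m)) w ≠ w := by
    by_contra hcon
    push_neg at hcon
    exact hane (Subtype.ext (Equiv.ext hcon))
  have hwdesc : IsPrefixV v w := by
    by_contra hc
    exact hw (mem_ristSub.mp harist w hc)
  haveI hinfw : Infinite ((rist G w).subgroupOf G) := infinite_ristSub hwb w
  haveI : Infinite ↥((rist G w).subgroupOf G ⊓ (Subgroup.normalizer (B : Set ↥G))) :=
    infinite_inf_of_finiteIndex _ _ hinfw
  obtain ⟨a', ha', ha'ne⟩ :=
    exists_mem_ne_one_of_infinite ((rist G w).subgroupOf G ⊓ (Subgroup.normalizer (B : Set ↥G)))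
  have ha'K : a' ∈ (rist G v).subgroupOf G ⊓ (Subgroup.normalizer (B : Set ↥G)) :=
    Subgroup.mem_inf.mpr
      ⟨ristSub_mono hwdesc (Subgroup.mem_inf.mp ha').1, (Subgroup.mem_inf.mp ha').2⟩
  have hca : Commute a' a := hcomm a' ha'K k hk
  have hfixa : a * a' * a⁻¹ = a' := by
    have h1 : a * a' = a' * a := hca.symm.eq
    rw [h1]
    group
  have hconja : a * a' * a⁻¹ ∈ (rist G ((a : Perm (Vertex m)) w)).subgroupOf G := by
    have h1 : a * a' * a⁻¹ ∈ conjS a ((rist G w).subgroupOf G) := by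
      rw [mem_conjS]
      have h2 : a⁻¹ * (a * a' * a⁻¹) * a = a' := by group
      rw [h2]
      exact (Subgroup.mem_inf.mp ha').1
    rwa [conjS_ristSub hG] at h1
  rw [hfixa] at hconja
  have hbot := ristSub_inf_bot (G := G) (u := w) (w := (a : Perm (Vertex m)) w)
    (fun h => hw h.symm) (coe_level hG a w).symm
  have hmem : a' ∈ (rist G w).subgroupOf G ⊓ (rist G ((a : Perm (Vertex m)) w)).subgroupOf G :=
    Subgroup.mem_inf.mpr ⟨(Subgroup.mem_inf.mp ha').1, hconja⟩
  rw [hbot] at hmem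
  exact ha'ne (Subgroup.mem_bot.mp hmem)

end TreeGroup

/-- Let `G ≤ Aut T` be a weakly branch group, `B` a nontrivial basal subgroup of `G`, and `v`
a vertex moved by `B`. Let `R = rist_G(v)^{N_G(B)}` be the normal closure of `rist_G(v)` in
`N_G(B)`, i.e. the subgroup generated by the conjugates of `rist_G(v)` by elements of `N_G(B)`.
Then `R` is basal, `N_G(R) = N_G(B)`, and `B ∩ R ≠ 1`. -/
theorem basal_normal_closure_of_rist (m : ℕ → ℕ) (hm : ∀ n, 2 ≤ m n)
    (G : Subgroup (Perm (Vertex m))) (hG : G ≤ treeAut m) (hwb : IsWeaklyBranch G)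
    (B : Subgroup ↥G) (hB : IsBasal B) (hBne : B ≠ ⊥)
    (v : Vertex m) (hv : ∃ b ∈ B, ((b : ↥G) : Perm (Vertex m)) v ≠ v) :
    IsBasal (⨆ h ∈ Subgroup.normalizer (B : Set ↥G), conjS h ((rist G v).subgroupOf G)) ∧
    Subgroup.normalizer ((⨆ h ∈ Subgroup.normalizer (B : Set ↥G), conjS h ((rist G v).subgroupOf G) : Subgroup ↥G) : Set ↥G) = Subgroup.normalizer (B : Set ↥G) ∧
    B ⊓ (⨆ h ∈ Subgroup.normalizer (B : Set ↥G), conjS h ((rist G v).subgroupOf G)) ≠ ⊥ := by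
    classical
  have hstab : ∀ f : ↥G, (f : Perm (Vertex m)) v = v → f ∈ (Subgroup.normalizer (B : Set ↥G)) :=
    stab_le_normalizer_basal hG hwb B hB v hv
  set O : Set (Vertex m) := {u | ∃ n : ↥G, n ∈ (Subgroup.normalizer (B : Set ↥G)) ∧ (n : Perm (Vertex m)) v = u}
    with hOdef
  have hOv : v ∈ O := ⟨1, (Subgroup.normalizer (B : Set ↥G)).one_mem, by simp⟩
  have hOlev : ∀ u ∈ O, u.1 = v.1 := by
    rintro u ⟨n, hn, rfl⟩
    exact coe_level hG n v
  have himglev : ∀ g : ↥G, ∀ u ∈ (fun z => (g : Perm (Vertex m)) z) '' O, u.1 = v.1 := by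
    rintro g u ⟨u', hu', rfl⟩
    rw [coe_level hG g u']
    exact hOlev u' hu'
  have hR : (⨆ h ∈ (Subgroup.normalizer (B : Set ↥G)), conjS h ((rist G v).subgroupOf G)) = ristProd G O := by
    apply le_antisymm
    · refine iSup_le fun h => iSup_le fun hh => ?_
      rw [conjS_ristSub hG]
      exact ristSub_le_ristProd ⟨h, hh, rfl⟩
    · refine iSup_le fun u => iSup_le fun hu => ?_
      obtain ⟨n, hn, rfl⟩ := hu
      rw [← conjS_ristSub hG]
      exact le_iSup₂ (f := fun (h : ↥G) (_ : h ∈ (Subgroup.normalizer (B : Set ↥G))) =>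
        conjS h ((rist G v).subgroupOf G)) n hn
  have hconjR : ∀ g : ↥G, conjS g (⨆ h ∈ (Subgroup.normalizer (B : Set ↥G)), conjS h ((rist G v).subgroupOf G))
      = ristProd G ((fun z => (g : Perm (Vertex m)) z) '' O) := by
    intro g
    rw [hR, conjS_ristProd hG]
  have himgO : ∀ x : ↥G, x ∈ (Subgroup.normalizer (B : Set ↥G)) →
      (fun z => (x : Perm (Vertex m)) z) '' O = O := by
    intro x hx
    ext z
    constructor
    · rintro ⟨u, ⟨n, hn, rfl⟩, rfl⟩
      refine ⟨x * n, (Subgroup.normalizer (B : Set ↥G)).mul_mem hx hn, ?_⟩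
      simp [Subgroup.coe_mul, Perm.mul_apply]
    · rintro ⟨n, hn, rfl⟩
      refine ⟨((x⁻¹ * n : ↥G) : Perm (Vertex m)) v,
        ⟨x⁻¹ * n, (Subgroup.normalizer (B : Set ↥G)).mul_mem ((Subgroup.normalizer (B : Set ↥G)).inv_mem hx) hn, rfl⟩, ?_⟩
      simp only [Subgroup.coe_mul, InvMemClass.coe_inv, Perm.mul_apply]
      simp
  have hOblock : ∀ g h : ↥G, ∀ u1 ∈ O, ∀ u2 ∈ O,
      (g : Perm (Vertex m)) u1 = (h : Perm (Vertex m)) u2 →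
      (fun z => (g : Perm (Vertex m)) z) '' O = (fun z => (h : Perm (Vertex m)) z) '' O := by
    intro g h u1 hu1 u2 hu2 heq
    obtain ⟨n1, hn1, rfl⟩ := hu1
    obtain ⟨n2, hn2, rfl⟩ := hu2
    have hfix : (((h * n2)⁻¹ * (g * n1) : ↥G) : Perm (Vertex m)) v = v := by
      refine eq_v_of_apply_eq (x := g * n1) (y := h * n2) ?_
      simp only [Subgroup.coe_mul, Perm.mul_apply]
      exact heq
    have ht := hstab _ hfix
    have hmem : n2 * ((h * n2)⁻¹ * (g * n1)) * n1⁻¹ ∈ (Subgroup.normalizer (B : Set ↥G)) :=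
      (Subgroup.normalizer (B : Set ↥G)).mul_mem ((Subgroup.normalizer (B : Set ↥G)).mul_mem hn2 ht) ((Subgroup.normalizer (B : Set ↥G)).inv_mem hn1)
    have hgn : g = h * (n2 * ((h * n2)⁻¹ * (g * n1)) * n1⁻¹) := by group
    have hcomp : ∀ x y : ↥G, (fun z => ((x * y : ↥G) : Perm (Vertex m)) z) '' O
        = (fun z => (x : Perm (Vertex m)) z) ''
            ((fun z => (y : Perm (Vertex m)) z) '' O) := by
      intro x y
      rw [← Set.image_comp]
      rfl
    calc (fun z => (g : Perm (Vertex m)) z) '' O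
        = (fun z => ((h * (n2 * ((h * n2)⁻¹ * (g * n1)) * n1⁻¹) : ↥G) :
            Perm (Vertex m)) z) '' O := by rw [← hgn]
      _ = (fun z => (h : Perm (Vertex m)) z) ''
            ((fun z => ((n2 * ((h * n2)⁻¹ * (g * n1)) * n1⁻¹ : ↥G) :
              Perm (Vertex m)) z) '' O) := hcomp _ _
      _ = (fun z => (h : Perm (Vertex m)) z) '' O := by rw [himgO _ hmem]
  refine ⟨⟨?_, ?_, ?_, iSup_conjS_eq_normalClosure _⟩, ?_, ?_⟩
  · -- finitely many conjugates
    refine Set.Finite.subset (Set.Finite.image (fun S => ristProd G S)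
      ((level_set_finite m v.1).finite_subsets)) ?_
    rintro S ⟨g, rfl⟩
    exact ⟨(fun z => (g : Perm (Vertex m)) z) '' O, fun u hu => himglev g u hu,
      (hconjR g).symm⟩
  · -- distinct conjugates commute elementwise
    intro g h hne x hx y hy
    rw [hconjR g] at hx
    rw [hconjR h] at hy
    have hSne : (fun z => (g : Perm (Vertex m)) z) '' O
        ≠ (fun z => (h : Perm (Vertex m)) z) '' O := by
      intro he
      exact hne (by rw [hconjR g, hconjR h, he])
    have hpd : Perm.Disjoint (x : Perm (Vertex m)) (y : Perm (Vertex m)) := by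
      intro z
      by_cases hz : ∃ u ∈ (fun z => (g : Perm (Vertex m)) z) '' O, IsPrefixV u z
      · right
        refine ristProd_fix hy fun u hu hpre => ?_
        obtain ⟨u', hu', hpre'⟩ := hz
        have heq : u' = u := eq_of_prefix_prefix
          ((himglev g u' hu').trans (himglev h u hu).symm) hpre' hpre
        obtain ⟨w1, hw1, hw1e⟩ := hu'
        obtain ⟨w2, hw2, hw2e⟩ := hu
        exact hSne (hOblock g h w1 hw1 w2 hw2 (hw1e.trans (heq.trans hw2e.symm)))
      · left
        push_neg at hz
        exact ristProd_fix hx hz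
    have hcp := hpd.commute
    show x * y = y * x
    exact Subtype.ext (by simpa only [Subgroup.coe_mul] using hcp.eq)
  · -- trivial intersections
    intro g
    rw [eq_bot_iff]
    intro x hx
    obtain ⟨hx1, hx2⟩ := Subgroup.mem_inf.mp hx
    rw [hconjR g] at hx1
    rw [Subgroup.mem_bot]
    have hmem2 : x ∈ Subgroup.comap G.subtype (fixingSubgroup (Perm (Vertex m))
        {z | ∃ u ∈ (fun z => (g : Perm (Vertex m)) z) '' O, IsPrefixV u z}) := by
      refine (iSup_le fun h => iSup_le fun hne => ?_ : _ ≤ Subgroup.comap _ _) hx2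
      intro y hy
      rw [hconjR h] at hy
      rw [Subgroup.mem_comap, mem_fixingSubgroup_iff]
      intro w hw
      obtain ⟨u, hu, hpre⟩ := hw
      refine ristProd_fix hy fun u' hu' hpre' => ?_
      have heq : u = u' := eq_of_prefix_prefix
        ((himglev g u hu).trans (himglev h u' hu').symm) hpre hpre'
      apply hne
      rw [hconjR g, hconjR h]
      obtain ⟨w1, hw1, hw1e⟩ := hu
      obtain ⟨w2, hw2, hw2e⟩ := hu'
      exact congrArg (ristProd G)
        (hOblock h g w2 hw2 w1 hw1 (hw2e.trans (heq.symm.trans hw1e.symm)))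
    rw [Subgroup.mem_comap, mem_fixingSubgroup_iff] at hmem2
    exact ristProd_eq_one hx1 fun z hz => hmem2 z hz
  · -- the normalizer of R is the normalizer of B
    apply le_antisymm
    · intro g hg
      have hgR := mem_normalizer_iff_conjS.mp hg
      rw [hconjR g, hR] at hgR
      have himg : (fun z => (g : Perm (Vertex m)) z) '' O = O :=
        ristProd_inj hG hwb (n := v.1) (himglev g) hOlev hgR
      have hgvO : (g : Perm (Vertex m)) v ∈ O := by
        rw [← himg]
        exact ⟨v, hOv, rfl⟩
      obtain ⟨n, hn, hnv⟩ := hgvO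
      have hfixv := eq_v_of_apply_eq (x := g) (y := n) hnv.symm
      have h2 := hstab _ hfixv
      have h3 : g = n * (n⁻¹ * g) := by group
      rw [h3]
      exact (Subgroup.normalizer (B : Set ↥G)).mul_mem hn h2
    · intro n hn
      apply mem_normalizer_iff_conjS.mpr
      rw [hconjR n, hR, himgO n hn]
  · -- B ⊓ R is nontrivial
    obtain ⟨b, hbB, hbv⟩ := hv
    haveI := infinite_ristSub hwb v
    obtain ⟨k, hkr, hkne⟩ := exists_mem_ne_one_of_infinite ((rist G v).subgroupOf G)
    have hkN : k ∈ (Subgroup.normalizer (B : Set ↥G)) := hstab k (ristSub_fixes hG hkr)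
    have hbinv : ((b : ↥G) : Perm (Vertex m))⁻¹ v ≠ v := by
      intro hc
      apply hbv
      conv_lhs => rw [← hc]
      simp
    have hlev : (((b : ↥G) : Perm (Vertex m))⁻¹ v).1 = v.1 := by
      rw [← coe_inv_perm]
      exact coe_level hG b⁻¹ v
    have hkinR : k ∈ ⨆ h ∈ (Subgroup.normalizer (B : Set ↥G)), conjS h ((rist G v).subgroupOf G) := by
      have h1 : k ∈ conjS (1 : ↥G) ((rist G v).subgroupOf G) := by
        rw [conjS_one]; exact hkr
      exact le_iSup₂ (f := fun (h : ↥G) (_ : h ∈ (Subgroup.normalizer (B : Set ↥G))) =>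
        conjS h ((rist G v).subgroupOf G)) 1 (Subgroup.normalizer (B : Set ↥G)).one_mem h1
    have hconjb : b⁻¹ * k * b ∈ conjS b⁻¹ ((rist G v).subgroupOf G) := by
      rw [mem_conjS]
      have h2 : (b⁻¹)⁻¹ * (b⁻¹ * k * b) * b⁻¹ = k := by group
      rw [h2]; exact hkr
    have hbkbR : b⁻¹ * k * b ∈ ⨆ h ∈ (Subgroup.normalizer (B : Set ↥G)), conjS h ((rist G v).subgroupOf G) :=
      le_iSup₂ (f := fun (h : ↥G) (_ : h ∈ (Subgroup.normalizer (B : Set ↥G))) =>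
        conjS h ((rist G v).subgroupOf G)) b⁻¹
        ((Subgroup.normalizer (B : Set ↥G)).inv_mem (Subgroup.le_normalizer hbB)) hconjb
    have hcR : k⁻¹ * (b⁻¹ * k * b) ∈ ⨆ h ∈ (Subgroup.normalizer (B : Set ↥G)), conjS h ((rist G v).subgroupOf G) :=
      Subgroup.mul_mem _ (Subgroup.inv_mem _ hkinR) hbkbR
    have hcB : k⁻¹ * (b⁻¹ * k * b) ∈ B := by
      have h1 : k⁻¹ * b⁻¹ * (k⁻¹)⁻¹ ∈ B :=
        (Subgroup.mem_normalizer_iff.mp ((Subgroup.normalizer (B : Set ↥G)).inv_mem hkN) b⁻¹).mp (B.inv_mem hbB)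
      have h2 : k⁻¹ * (b⁻¹ * k * b) = (k⁻¹ * b⁻¹ * (k⁻¹)⁻¹) * b := by group
      rw [h2]
      exact B.mul_mem h1 hbB
    have hcne : k⁻¹ * (b⁻¹ * k * b) ≠ 1 := by
      intro h
      have heq : k = b⁻¹ * k * b := inv_mul_eq_one.mp h
      have hmem2 : k ∈ (rist G (((b : ↥G) : Perm (Vertex m))⁻¹ v)).subgroupOf G := by
        have h1 := hconjb
        rw [conjS_ristSub hG, coe_inv_perm] at h1
        rw [heq]
        exact h1
      have hbot := ristSub_inf_bot (G := G) (u := v)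
        (w := ((b : ↥G) : Perm (Vertex m))⁻¹ v) (fun hc => hbinv hc.symm) hlev.symm
      have hmm : k ∈ (rist G v).subgroupOf G ⊓
          (rist G (((b : ↥G) : Perm (Vertex m))⁻¹ v)).subgroupOf G :=
        Subgroup.mem_inf.mpr ⟨hkr, hmem2⟩
      rw [hbot] at hmm
      exact hkne (Subgroup.mem_bot.mp hmm)
    intro hbotBR
    have hc2 : k⁻¹ * (b⁻¹ * k * b) ∈
        B ⊓ (⨆ h ∈ (Subgroup.normalizer (B : Set ↥G)), conjS h ((rist G v).subgroupOf G)) :=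
      Subgroup.mem_inf.mpr ⟨hcB, hcR⟩
    rw [hbotBR] at hc2
    exact hcne (Subgroup.mem_bot.mp hc2)
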